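/- arXiv:2103.03203 — 3 statements merged into one kernel-verified Lean document; each statement's English description precedes it below -/
import Mathlib

section
/- Let r > 0 and let β ∈ 𝒰^{m₂×m}[0,r] satisfy conditions (1.4), with block decomposition β = [β₁ β₂]. Then the m₂×m₂ matrix β₂(0) is invertible, and the matrix Φ₁(0) := β₂(0)^{-1} β₁(0) satisfies Φ₁(0) Φ₁(0)* = I_{m₂}. -/
open MeasureTheory Set Filter Complex Matrix

noncomputable section

/-- Lebesgue measure restricted to `(0, r]`. -/
def mu (r : ℝ) : Measure ℝ := volume.restrict (Ioc 0 r)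

/-- The Hilbert space `L²((0,r), ℂⁿ)`. -/
abbrev L2 (n : ℕ) (r : ℝ) := Lp (EuclideanSpace ℂ (Fin n)) 2 (mu r)

/-- The signature matrix `j = diag(I_{m₁}, -I_{m₂})`. -/
def sigJ (m₁ m₂ : ℕ) : Matrix (Fin m₁ ⊕ Fin m₂) (Fin m₁ ⊕ Fin m₂) ℂ :=
  Matrix.fromBlocks 1 0 0 (-1)

/-- `G` belongs to the class `𝒰^{p×q}[0,r]`, with first derivative `G'` and
second derivative `G''` (entrywise, `G'' ∈ L₂`). -/
def IsU (r : ℝ) {p q : Type*} [Fintype p] [Fintype q]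
    (G G' G'' : ℝ → Matrix p q ℂ) : Prop :=
  (∀ x ∈ Icc (0:ℝ) r, ∀ i k, HasDerivAt (fun y => G y i k) (G' x i k) x) ∧
  (∀ x ∈ Icc (0:ℝ) r, ∀ i k, G' x i k = G' 0 i k + ∫ t in (0:ℝ)..x, G'' t i k) ∧
  (∀ i k, MemLp (fun t => G'' t i k) 2 (mu r))

/-- Conditions (1.4): `β j β* ≡ 0` and `β' j β* ≡ i I` on `[0,r]`. -/
def Cond14 {m₁ m₂ : ℕ} (r : ℝ)
    (β β' : ℝ → Matrix (Fin m₂) (Fin m₁ ⊕ Fin m₂) ℂ) : Prop :=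
  ∀ x ∈ Icc (0:ℝ) r,
    β x * sigJ m₁ m₂ * (β x)ᴴ = 0 ∧
    β' x * sigJ m₁ m₂ * (β x)ᴴ = Complex.I • (1 : Matrix (Fin m₂) (Fin m₂) ℂ)

/-- `A` is the operator `(Af)(x) = ∫₀ˣ (t-x) f(t) dt` on `L²((0,r),ℂ^{m₂})`. -/
def IsOpA {m₂ : ℕ} (r : ℝ) (A : L2 m₂ r →L[ℂ] L2 m₂ r) : Prop :=
  ∀ f : L2 m₂ r, ∀ᵐ x ∂(mu r), ∀ i,
    A f x i = ∫ t in Ioc (0:ℝ) x, ((t : ℂ) - (x : ℂ)) * f t i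

/-- `K` is the operator `(Kf)(x) = i β(x) j ∫₀ˣ β(t)* f(t) dt` on `L²((0,r),ℂ^{m₂})`. -/
def IsOpK {m₁ m₂ : ℕ} (r : ℝ) (β : ℝ → Matrix (Fin m₂) (Fin m₁ ⊕ Fin m₂) ℂ)
    (K : L2 m₂ r →L[ℂ] L2 m₂ r) : Prop :=
  ∀ f : L2 m₂ r, ∀ᵐ x ∂(mu r), ∀ i,
    K f x i = Complex.I * ∑ k, (β x * sigJ m₁ m₂) i k *
      ∫ t in Ioc (0:ℝ) x, ∑ l, (starRingEnd ℂ) (β t l k) * f t l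

/-- The block `β₁(0)` of `β(0) = [β₁(0) β₂(0)]`. -/
def blkA {m₁ m₂ : ℕ} (β : ℝ → Matrix (Fin m₂) (Fin m₁ ⊕ Fin m₂) ℂ) :
    Matrix (Fin m₂) (Fin m₁) ℂ := Matrix.of fun i k => β 0 i (Sum.inl k)

/-- The block `β₂(0)` of `β(0) = [β₁(0) β₂(0)]`. -/
def blkB {m₁ m₂ : ℕ} (β : ℝ → Matrix (Fin m₂) (Fin m₁ ⊕ Fin m₂) ℂ) :
    Matrix (Fin m₂) (Fin m₂) ℂ := Matrix.of fun i k => β 0 i (Sum.inr k)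

/-! Write `β(0) = [A B]`. The identity `β j β* = 0` at `0` reads `A A* = B B*`, while
`β' j β* = i I` gives `β(0)*` a left inverse. Hence if `B* v = 0` then `A A* v = 0`, so
`A* v = 0`, so `β(0)* v = 0` and `v = 0`: `B` is invertible. Then
`(B⁻¹A)(B⁻¹A)* = B⁻¹ (A A*) B*⁻¹ = B⁻¹ (B B*) B*⁻¹ = I`. -/

namespace Matrix

variable {m n₁ n₂ R : Type*} [Fintype n₁] [Fintype n₂]

lemma fromCols_mul_fromBlocks_one_neg_one_mul_conjTranspose [DecidableEq n₁] [DecidableEq n₂]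
    [Ring R] [StarRing R] (A : Matrix m n₁ R) (B : Matrix m n₂ R) :
    fromCols A B * (fromBlocks 1 0 0 (-1) : Matrix (n₁ ⊕ n₂) (n₁ ⊕ n₂) R) * (fromCols A B)ᴴ =
      A * Aᴴ - B * Bᴴ := by
  rw [fromCols_mul_fromBlocks, conjTranspose_fromCols_eq_fromRows_conjTranspose,
    fromCols_mul_fromRows]
  simp [sub_eq_add_neg]

lemma isUnit_of_self_mul_conjTranspose_eq [DecidableEq n₂] [Field R] [PartialOrder R]
    [StarRing R] [StarOrderedRing R]
    {A : Matrix n₂ n₁ R} {B : Matrix n₂ n₂ R} {L : Matrix n₂ (n₁ ⊕ n₂) R}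
    (hAB : A * Aᴴ = B * Bᴴ) (hL : L * (fromCols A B)ᴴ = 1) : IsUnit B := by
  rw [← isUnit_conjTranspose, isUnit_iff_isUnit_det, isUnit_iff_ne_zero, Ne,
    ← exists_mulVec_eq_zero_iff]
  rintro ⟨v, hv, hBv⟩
  have hAv : Aᴴ *ᵥ v = 0 := by
    rw [← self_mul_conjTranspose_mulVec_eq_zero, hAB, ← mulVec_mulVec, hBv, mulVec_zero]
  have hCv : (fromCols A B)ᴴ *ᵥ v = 0 := by
    rw [conjTranspose_fromCols_eq_fromRows_conjTranspose, fromRows_mulVec, hAv, hBv]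
    ext (_ | _) <;> rfl
  apply hv
  rw [← one_mulVec v, ← hL, ← mulVec_mulVec, hCv, mulVec_zero]

lemma inv_mul_mul_conjTranspose_inv_mul_eq_one [DecidableEq n₂] [CommRing R] [StarRing R]
    {A : Matrix n₂ n₁ R} {B : Matrix n₂ n₂ R} (hB : IsUnit B) (hAB : A * Aᴴ = B * Bᴴ) :
    (B⁻¹ * A) * (B⁻¹ * A)ᴴ = 1 := by
  have hBdet : IsUnit B.det := (isUnit_iff_isUnit_det B).mp hB
  have hBHdet : IsUnit Bᴴ.det := by rwa [det_conjTranspose, isUnit_star]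
  calc (B⁻¹ * A) * (B⁻¹ * A)ᴴ = B⁻¹ * (A * Aᴴ) * (Bᴴ)⁻¹ := by
        rw [conjTranspose_mul, conjTranspose_nonsing_inv]; simp only [Matrix.mul_assoc]
    _ = (B⁻¹ * B) * (Bᴴ * (Bᴴ)⁻¹) := by rw [hAB]; simp only [Matrix.mul_assoc]
    _ = 1 := by rw [nonsing_inv_mul B hBdet, mul_nonsing_inv _ hBHdet, Matrix.one_mul]

end Matrix

lemma fromCols_blkA_blkB {m₁ m₂ : ℕ} (β : ℝ → Matrix (Fin m₂) (Fin m₁ ⊕ Fin m₂) ℂ) :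
    Matrix.fromCols (blkA β) (blkB β) = β 0 := by
  ext i (k | k) <;> rfl

theorem statement4_general {m₁ m₂ : ℕ} {r : ℝ} (hr : 0 < r)
    (β β' : ℝ → Matrix (Fin m₂) (Fin m₁ ⊕ Fin m₂) ℂ)
    (hβ14 : Cond14 r β β') :
    IsUnit (blkB β) ∧
    ((blkB β)⁻¹ * blkA β) * ((blkB β)⁻¹ * blkA β)ᴴ = 1 := by
  obtain ⟨hnull, hderiv⟩ := hβ14 0 ⟨le_rfl, hr.le⟩
  rw [← fromCols_blkA_blkB β, sigJ] at hnull hderiv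
  have hAB : blkA β * (blkA β)ᴴ = blkB β * (blkB β)ᴴ := by
    rwa [fromCols_mul_fromBlocks_one_neg_one_mul_conjTranspose, sub_eq_zero] at hnull
  have hB : IsUnit (blkB β) := by
    open scoped ComplexOrder in
    refine isUnit_of_self_mul_conjTranspose_eq hAB (L := -I • (β' 0 * sigJ m₁ m₂)) ?_
    rw [sigJ, Matrix.smul_mul, hderiv, smul_smul, neg_mul, I_mul_I, neg_neg, one_smul]
  exact ⟨hB, inv_mul_mul_conjTranspose_inv_mul_eq_one hB hAB⟩

/-- `β₂(0)` is invertible and `Φ₁(0) = β₂(0)⁻¹β₁(0)` satisfies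
`Φ₁(0)Φ₁(0)* = I_{m₂}`. -/
theorem statement4 {m₁ m₂ : ℕ} {r : ℝ} (hr : 0 < r)
    (β β' β'' : ℝ → Matrix (Fin m₂) (Fin m₁ ⊕ Fin m₂) ℂ)
    (hβU : IsU r β β' β'') (hβ14 : Cond14 r β β') :
    IsUnit (blkB β) ∧
    ((blkB β)⁻¹ * blkA β) * ((blkB β)⁻¹ * blkA β)ᴴ = 1 :=
  statement4_general hr β β' hβ14
end
end

section
/- Let r > 0 and let v₀ ∈ L₂^{m₂×m₂}(0,2r). Define the operator S₀ on L₂^{m₂}(0,r) by (S₀f)(x) = ∫₀^r v₀(x+t) f(t) dt. Then S₀ satisfies the operator identity 𝒜S₀ + S₀𝒜* = i M, where (Mf)(x) = ∫₀^r ( ∫_t^x v₀(s) ds ) f(t) dt. -/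
/-!
The adjoint of the Volterra operator is `(𝒜*f)(t) = -i ∫ₜʳ f`, by Fubini on the triangle
`{t ≤ x}`: `∫₀ʳ (∫₀ˣ f) g dx = ∫₀ʳ f(t) (∫ₜʳ g) dt`. Evaluating both sides at `x`, the identity
becomes `∫₀ˣ ∫₀ʳ v₀(t+s) f(s) ds dt - ∫₀ʳ v₀(x+t) (∫ₜʳ f) dt = ∫₀ʳ (∫ₜˣ v₀) f(t) dt`. Exchanging the
order of integration in both terms on the left turns their kernels into `∫ₛ^{x+s} v₀` and
`∫ₓ^{x+s} v₀`, whose difference is `∫ₛˣ v₀`.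
-/

open MeasureTheory Set Filter Complex Matrix

noncomputable section

open scoped ComplexConjugate

section Interval

variable {E : Type*} [NormedAddCommGroup E] {𝕜 : Type*} [RCLike 𝕜] {a b : ℝ}

theorem MeasureTheory.IntegrableOn.comp_add_right_Ioc {w : ℝ → E} {c : ℝ}
    (hw : IntegrableOn w (Ioc (a + c) (b + c))) : IntegrableOn (fun t => w (t + c)) (Ioc a b) := by
  simpa [Function.comp_def] using ((measurePreserving_add_right volume c).integrableOn_comp_preimage
    (measurableEmbedding_addRight c)).2 hw

theorem MeasureTheory.IntegrableOn.comp_add_left_Ioc {w : ℝ → E} {c : ℝ}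
    (hw : IntegrableOn w (Ioc (c + a) (c + b))) : IntegrableOn (fun t => w (c + t)) (Ioc a b) := by
  simp_rw [add_comm c] at hw ⊢
  exact hw.comp_add_right_Ioc

theorem MeasureTheory.IntegrableOn.continuousOn_mul_Icc {c φ : ℝ → 𝕜}
    (hφ : IntegrableOn φ (Ioc a b)) (hc : ContinuousOn c (Icc a b)) :
    IntegrableOn (fun t => c t * φ t) (Ioc a b) :=
  (((integrableOn_Icc_iff_integrableOn_Ioc (f := φ)).2 hφ).continuousOn_mul hc
    isCompact_Icc).mono_set Ioc_subset_Icc_self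

theorem MeasureTheory.IntegrableOn.mul_continuousOn_Icc {c φ : ℝ → 𝕜}
    (hφ : IntegrableOn φ (Ioc a b)) (hc : ContinuousOn c (Icc a b)) :
    IntegrableOn (fun t => φ t * c t) (Ioc a b) :=
  (((integrableOn_Icc_iff_integrableOn_Ioc (f := φ)).2 hφ).mul_continuousOn hc
    isCompact_Icc).mono_set Ioc_subset_Icc_self

theorem continuousOn_primitive_Icc {f : ℝ → 𝕜} (hf : IntegrableOn f (Ioc a b)) :
    ContinuousOn (fun x => ∫ t in a..x, f t) (Icc a b) := by
  rcases le_or_gt a b with hab | hab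
  · rw [← uIcc_of_le hab]
    exact intervalIntegral.continuousOn_primitive_interval
      (by rwa [uIcc_of_le hab, integrableOn_Icc_iff_integrableOn_Ioc])
  · simp [Icc_eq_empty_of_lt hab]

theorem continuousOn_tail_Icc {f : ℝ → 𝕜} (hf : IntegrableOn f (Ioc a b)) :
    ContinuousOn (fun x => ∫ t in x..b, f t) (Icc a b) := by
  rcases le_or_gt a b with hab | hab
  · rw [← uIcc_of_le hab]
    exact intervalIntegral.continuousOn_primitive_interval_left
      (by rwa [uIcc_of_le hab, integrableOn_Icc_iff_integrableOn_Ioc])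
  · simp [Icc_eq_empty_of_lt hab]

theorem integral_primitive_mul_eq_integral_mul_tail {f g : ℝ → 𝕜}
    (hf : IntegrableOn f (Ioc a b)) (hg : IntegrableOn g (Ioc a b)) :
    ∫ x in Ioc a b, (∫ t in a..x, f t) * g x = ∫ t in Ioc a b, f t * ∫ s in t..b, g s := by
  set F : ℝ × ℝ → 𝕜 := {p | p.2 ≤ p.1}.indicator fun p => g p.1 * f p.2
  have hF : Integrable F ((volume.restrict (Ioc a b)).prod (volume.restrict (Ioc a b))) :=
    (hg.mul_prod hf).indicator (measurableSet_le measurable_snd measurable_fst)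
  have inner_t : ∀ x ∈ Ioc a b, ∫ t in Ioc a b, F (x, t) = (∫ t in a..x, f t) * g x := by
    intro x hx
    have : ∀ t, F (x, t) = (Iic x).indicator (fun t => g x * f t) t := fun t => rfl
    simp_rw [this, setIntegral_indicator measurableSet_Iic, Ioc_inter_Iic, min_eq_right hx.2,
      integral_const_mul, intervalIntegral.integral_of_le hx.1.le, mul_comm]
  have inner_x : ∀ t ∈ Ioc a b, ∫ x in Ioc a b, F (x, t) = f t * ∫ s in t..b, g s := by
    intro t ht
    have : ∀ x, F (x, t) = (Ici t).indicator (fun x => g x * f t) x := fun x => rfl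
    have hset : Ioc a b ∩ Ici t = Icc t b := by
      ext x; simp only [mem_inter_iff, mem_Ioc, mem_Ici, mem_Icc]
      constructor
      · rintro ⟨⟨-, hxb⟩, htx⟩; exact ⟨htx, hxb⟩
      · rintro ⟨htx, hxb⟩; exact ⟨⟨ht.1.trans_le htx, hxb⟩, htx⟩
    simp_rw [this, setIntegral_indicator measurableSet_Ici, hset, integral_Icc_eq_integral_Ioc,
      integral_mul_const, intervalIntegral.integral_of_le ht.2, mul_comm]
  calc ∫ x in Ioc a b, (∫ t in a..x, f t) * g x
      = ∫ x in Ioc a b, ∫ t in Ioc a b, F (x, t) :=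
        setIntegral_congr_fun measurableSet_Ioc fun x hx => (inner_t x hx).symm
    _ = ∫ t in Ioc a b, ∫ x in Ioc a b, F (x, t) := integral_integral_swap hF
    _ = ∫ t in Ioc a b, f t * ∫ s in t..b, g s :=
        setIntegral_congr_fun measurableSet_Ioc inner_x

theorem integral_sum_primitive_mul_eq_integral_sum_mul_tail {ι : Type*} [Fintype ι]
    {f g : ι → ℝ → 𝕜} (hf : ∀ k, IntegrableOn (f k) (Ioc a b))
    (hg : ∀ k, IntegrableOn (g k) (Ioc a b)) :
    ∫ x in Ioc a b, ∑ k, (∫ t in a..x, f k t) * g k x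
      = ∫ t in Ioc a b, ∑ k, f k t * ∫ s in t..b, g k s := by
  rw [integral_finsetSum _ fun k _ =>
      (hg k).continuousOn_mul_Icc (continuousOn_primitive_Icc (hf k)),
    integral_finsetSum _ fun k _ => (hf k).mul_continuousOn_Icc (continuousOn_tail_Icc (hg k))]
  exact Finset.sum_congr rfl fun k _ => integral_primitive_mul_eq_integral_mul_tail (hf k) (hg k)

theorem integrable_comp_add_mul_prod {w φ : ℝ → 𝕜} {c d : ℝ}
    (hw : IntegrableOn w (Ioc (a + c) (b + d))) (hφ : IntegrableOn φ (Ioc c d)) :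
    Integrable (fun p : ℝ × ℝ => w (p.1 + p.2) * φ p.2)
      ((volume.restrict (Ioc a b)).prod (volume.restrict (Ioc c d))) := by
  set W := (Ioc (a + c) (b + d)).indicator w
  have hW : Integrable W := (integrable_indicator_iff measurableSet_Ioc).2 hw
  -- the shear `(s, t) ↦ (s, s + t)` preserves `λ|_(c,d] ⊗ λ`
  have hshear : Integrable (fun q : ℝ × ℝ => φ q.1 * W (q.1 + q.2))
      ((volume.restrict (Ioc c d)).prod volume) :=
    ((measurePreserving_prod_add _ _).integrable_comp
      (hφ.mul_prod hW).aestronglyMeasurable).2 (hφ.mul_prod hW)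
  have hW' : Integrable (fun p : ℝ × ℝ => W (p.1 + p.2) * φ p.2)
      ((volume.restrict (Ioc a b)).prod (volume.restrict (Ioc c d))) :=
    ((hshear.mono_measure (Measure.prod_mono le_rfl Measure.restrict_le_self)).swap).congr
      (Eventually.of_forall fun p => by simp only [Function.comp, Prod.fst_swap, Prod.snd_swap,
        add_comm, mul_comm])
  refine hW'.congr ?_
  rw [Measure.prod_restrict]
  filter_upwards [ae_restrict_mem (measurableSet_Ioc.prod measurableSet_Ioc)] with p ⟨ht, hs⟩
  exact congrArg (· * φ p.2) (indicator_of_mem (show p.1 + p.2 ∈ Ioc (a + c) (b + d) from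
    ⟨add_lt_add ht.1 hs.1, add_le_add ht.2 hs.2⟩) w)

theorem hankel_volterra_kernel {ι : Type*} [Fintype ι] {w φ : ι → ℝ → 𝕜} {r x : ℝ}
    (hw : ∀ k, IntegrableOn (w k) (Ioc 0 (2 * r))) (hφ : ∀ k, IntegrableOn (φ k) (Ioc 0 r))
    (hx : x ∈ Ioc 0 r) :
    (∫ t in Ioc 0 x, ∫ s in Ioc 0 r, ∑ k, w k (t + s) * φ k s)
      - ∫ t in Ioc 0 r, ∑ k, w k (x + t) * ∫ s in t..r, φ k s
      = ∫ t in Ioc 0 r, ∑ k, (∫ s in t..x, w k s) * φ k t := by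
  obtain ⟨hx0, hxr⟩ := hx
  have hwI : ∀ k, ∀ u ∈ Icc 0 (2 * r), ∀ v ∈ Icc 0 (2 * r), IntervalIntegrable (w k) volume u v :=
    fun k u hu v hv => intervalIntegrable_iff.2
      ((hw k).mono_set (Ioc_subset_Ioc (le_min hu.1 hv.1) (max_le hu.2 hv.2)))
  have hslice : ∀ k, ∀ s ∈ Ioc 0 r, IntegrableOn (fun t => w k (t + s)) (Ioc 0 x) :=
    fun k s hs => ((hw k).mono_set (Ioc_subset_Ioc (by linarith [hs.1]) (by linarith [hs.2])))
      |>.comp_add_right_Ioc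
  have hshift : ∀ k, IntegrableOn (fun t => w k (x + t)) (Ioc 0 r) :=
    fun k => ((hw k).mono_set (Ioc_subset_Ioc (by linarith) (by linarith))).comp_add_left_Ioc
  have hprod : Integrable (fun p : ℝ × ℝ => ∑ k, w k (p.1 + p.2) * φ k p.2)
      ((volume.restrict (Ioc 0 x)).prod (volume.restrict (Ioc 0 r))) :=
    integrable_finsetSum _ fun k _ => integrable_comp_add_mul_prod
      ((hw k).mono_set (Ioc_subset_Ioc (add_zero 0).ge (by linarith))) (hφ k)
  have hmarg : IntegrableOn (fun s => ∫ t in Ioc 0 x, ∑ k, w k (t + s) * φ k s) (Ioc 0 r) :=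
    hprod.integral_prod_right
  rw [integral_integral_swap hprod, ← integral_sum_primitive_mul_eq_integral_sum_mul_tail hshift hφ,
    ← integral_sub hmarg (integrable_finsetSum _ fun k _ =>
      (hφ k).continuousOn_mul_Icc (continuousOn_primitive_Icc (hshift k)))]
  refine setIntegral_congr_fun measurableSet_Ioc fun s hs => ?_
  rw [integral_finsetSum _ fun k _ => (hslice k s hs).mul_const _, ← Finset.sum_sub_distrib]
  refine Finset.sum_congr rfl fun k _ => ?_
  -- `∫₀ˣ w(t+s) dt - ∫₀ˢ w(x+t) dt = ∫ₛ^{s+x} w - ∫ₓ^{s+x} w = ∫ₛˣ w`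
  rw [integral_mul_const, ← sub_mul, ← intervalIntegral.integral_of_le hx0.le,
    intervalIntegral.integral_comp_add_right, intervalIntegral.integral_comp_add_left, zero_add,
    add_zero, add_comm x s, ← intervalIntegral.integral_add_adjacent_intervals
      (hwI k s ⟨hs.1.le, by linarith [hs.2]⟩ x ⟨hx0.le, by linarith⟩)
      (hwI k x ⟨hx0.le, by linarith⟩ (s + x) ⟨by linarith [hs.1], by linarith [hs.2]⟩),
    add_sub_cancel_right]

theorem memLp_restrict_Ioc_of_continuousOn {G : ℝ → E} (hG : ContinuousOn G (Icc a b))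
    (p : ENNReal) :
    MemLp G p (volume.restrict (Ioc a b)) := by
  obtain ⟨C, hC⟩ := isCompact_Icc.exists_bound_of_continuousOn hG
  exact MemLp.of_bound ((hG.mono Ioc_subset_Icc_self).aestronglyMeasurable measurableSet_Ioc) C
    (ae_restrict_of_forall_mem measurableSet_Ioc fun t ht => hC t (Ioc_subset_Icc_self ht))

end Interval

section L2

variable {n : ℕ} {r : ℝ}

theorem integrableOn_coord (f : L2 n r) (k : Fin n) : IntegrableOn (fun t => f t k) (Ioc 0 r) :=
  have hk : MemLp (fun t => f t k) 2 (volume.restrict (Ioc 0 r)) :=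
    (EuclideanSpace.proj (𝕜 := ℂ) k).comp_memLp' (Lp.memLp f)
  hk.integrable one_le_two

theorem inner_L2_eq_integral_sum (u v : L2 n r) :
    inner ℂ u v = ∫ t in Ioc 0 r, ∑ i, conj (u t i) * v t i := by
  rw [L2.inner_def]
  exact integral_congr_ae (Eventually.of_forall fun t => by
    simp only [PiLp.inner_apply, RCLike.inner_apply', mu])

theorem adjoint_volterra_apply_ae (𝒜 : L2 n r →L[ℂ] L2 n r)
    (h𝒜 : ∀ f : L2 n r, ∀ᵐ x ∂(mu r), ∀ i, 𝒜 f x i = I * ∫ t in Ioc (0:ℝ) x, f t i)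
    (f : L2 n r) :
    ∀ᵐ t ∂(mu r), ∀ k, ContinuousLinearMap.adjoint 𝒜 f t k = -I * ∫ s in t..r, f s k := by
  set G : ℝ → EuclideanSpace ℂ (Fin n) := fun t => WithLp.toLp 2 fun k => -I * ∫ s in t..r, f s k
  have hG : MemLp G 2 (mu r) := memLp_restrict_Ioc_of_continuousOn
    ((PiLp.continuous_toLp 2 _).comp_continuousOn (continuousOn_pi.2 fun k =>
      continuousOn_const.mul (continuousOn_tail_Icc (integrableOn_coord f k)))) 2
  have hadj : ContinuousLinearMap.adjoint 𝒜 f = hG.toLp G := by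
    refine ext_inner_left ℂ fun u => ?_
    have hc : ∀ i, IntegrableOn (fun t => -I * conj (u t i)) (Ioc 0 r) := fun i =>
      (conjCLE.toContinuousLinearMap.integrable_comp (integrableOn_coord u i)).const_mul _
    rw [ContinuousLinearMap.adjoint_inner_right, inner_L2_eq_integral_sum, inner_L2_eq_integral_sum]
    calc ∫ x in Ioc 0 r, ∑ i, conj (𝒜 u x i) * f x i
        = ∫ x in Ioc 0 r, ∑ i, (∫ t in 0..x, -I * conj (u t i)) * f x i := by
          refine integral_congr_ae ?_
          filter_upwards [h𝒜 u, ae_restrict_mem measurableSet_Ioc] with x hx hx0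
          simp only [hx, intervalIntegral.integral_of_le hx0.1.le, integral_const_mul,
            integral_conj, map_mul, conj_I]
      _ = ∫ t in Ioc 0 r, ∑ i, -I * conj (u t i) * ∫ s in t..r, f s i :=
          integral_sum_primitive_mul_eq_integral_sum_mul_tail hc (integrableOn_coord f)
      _ = ∫ t in Ioc 0 r, ∑ i, conj (u t i) * hG.toLp G t i := by
          refine integral_congr_ae ?_
          filter_upwards [hG.coeFn_toLp] with t ht
          simp only [ht, G]
          exact Finset.sum_congr rfl fun i _ => by ring
  filter_upwards [hadj ▸ hG.coeFn_toLp] with t ht k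
  rw [ht]

end L2

theorem statement16_general {m₂ : ℕ} {r : ℝ}
    (v0 : ℝ → Matrix (Fin m₂) (Fin m₂) ℂ)
    (hv0 : ∀ i k, MemLp (fun t => v0 t i k) 2 (volume.restrict (Ioc (0:ℝ) (2*r))))
    (𝒜 S0 M : L2 m₂ r →L[ℂ] L2 m₂ r)
    (h𝒜 : ∀ f : L2 m₂ r, ∀ᵐ x ∂(mu r), ∀ i,
      𝒜 f x i = Complex.I * ∫ t in Ioc (0:ℝ) x, f t i)
    (hS0 : ∀ f : L2 m₂ r, ∀ᵐ x ∂(mu r), ∀ i,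
      S0 f x i = ∫ t in Ioc (0:ℝ) r, ∑ k, v0 (x + t) i k * f t k)
    (hM : ∀ f : L2 m₂ r, ∀ᵐ x ∂(mu r), ∀ i,
      M f x i = ∫ t in Ioc (0:ℝ) r, ∑ k, (∫ s in t..x, v0 s i k) * f t k) :
    𝒜.comp S0 + S0.comp (ContinuousLinearMap.adjoint 𝒜) = Complex.I • M := by
  have hw : ∀ i k, IntegrableOn (fun t => v0 t i k) (Ioc 0 (2 * r)) :=
    fun i k => (hv0 i k).integrable one_le_two
  refine ContinuousLinearMap.ext fun f => Lp.ext ?_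
  have hg := adjoint_volterra_apply_ae 𝒜 h𝒜 f
  set g := ContinuousLinearMap.adjoint 𝒜 f
  filter_upwards [Lp.coeFn_add (𝒜 (S0 f)) (S0 g), Lp.coeFn_smul I (M f), h𝒜 (S0 f), hS0 g, hM f,
    ae_restrict_mem measurableSet_Ioc] with x hadd hsmul h𝒜x hS0x hMx hx
  ext i
  have hS : ∫ t in Ioc 0 x, S0 f t i
      = ∫ t in Ioc 0 x, ∫ s in Ioc 0 r, ∑ k, v0 (t + s) i k * f s k :=
    integral_congr_ae ((ae_restrict_of_ae_restrict_of_subset (Ioc_subset_Ioc_right hx.2)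
      (hS0 f)).mono fun t ht => ht i)
  have hA : ∫ t in Ioc 0 r, ∑ k, v0 (x + t) i k * g t k
      = -I * ∫ t in Ioc 0 r, ∑ k, v0 (x + t) i k * ∫ s in t..r, f s k := by
    rw [← integral_const_mul]
    refine integral_congr_ae (hg.mono fun t ht => ?_)
    simp only [ht, Finset.mul_sum]
    exact Finset.sum_congr rfl fun k _ => by ring
  have hK := hankel_volterra_kernel (hw i) (integrableOn_coord f) hx
  rw [_root_.add_apply, ContinuousLinearMap.comp_apply, ContinuousLinearMap.comp_apply,
    _root_.smul_apply, hadd, hsmul, Pi.add_apply, Pi.smul_apply, PiLp.add_apply,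
    PiLp.smul_apply, smul_eq_mul, h𝒜x, hS0x, hMx, hS, hA]
  linear_combination I * hK

/-- Example 4.7: the Hankel-type operator
`(S₀f)(x) = ∫₀ʳ v₀(x+t) f(t) dt` satisfies
`𝒜S₀ + S₀𝒜* = i∫₀ʳ (∫_t^x v₀(s) ds) · dt`. -/
theorem statement16 {m₂ : ℕ} {r : ℝ} (hr : 0 < r)
    (v0 : ℝ → Matrix (Fin m₂) (Fin m₂) ℂ)
    (hv0 : ∀ i k, MemLp (fun t => v0 t i k) 2 (volume.restrict (Ioc (0:ℝ) (2*r))))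
    (𝒜 S0 M : L2 m₂ r →L[ℂ] L2 m₂ r)
    (h𝒜 : ∀ f : L2 m₂ r, ∀ᵐ x ∂(mu r), ∀ i,
      𝒜 f x i = Complex.I * ∫ t in Ioc (0:ℝ) x, f t i)
    (hS0 : ∀ f : L2 m₂ r, ∀ᵐ x ∂(mu r), ∀ i,
      S0 f x i = ∫ t in Ioc (0:ℝ) r, ∑ k, v0 (x + t) i k * f t k)
    (hM : ∀ f : L2 m₂ r, ∀ᵐ x ∂(mu r), ∀ i,
      M f x i = ∫ t in Ioc (0:ℝ) r, ∑ k, (∫ s in t..x, v0 s i k) * f t k) :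
    𝒜.comp S0 + S0.comp (ContinuousLinearMap.adjoint 𝒜) = Complex.I • M :=
  statement16_general v0 hv0 𝒜 S0 M h𝒜 hS0 hM
end
end

section
/- For every λ in the open upper half-plane ℂ₊, the quadratic equation ζ² + (1/λ + 2)ζ + 1 = 0 has two roots ζ₁, ζ₂ with ζ₁ζ₂ = 1, neither root has modulus 1, and exactly one of the roots lies in the open unit disc |ζ| < 1. -/
/-!
If `ζ² + bζ + 1 = 0` and `|ζ| = 1`, then `ζ⁻¹ = ζ̄`, so dividing by `ζ` gives `b = -(ζ + ζ̄)`,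
which is real. For `λ ∈ ℂ₊` the coefficient `b = 1/λ + 2` has `Im b = -Im λ / |λ|² < 0`, so no root
lies on the unit circle. By Vieta the two roots have product `1`, hence their moduli are reciprocal
and exactly one of them is `< 1`; in particular they are distinct, since a double root would
satisfy `ζ² = 1`.
-/

open Complex

open ComplexConjugate in
theorem Complex.im_eq_zero_of_sq_add_mul_add_one_eq_zero {b ζ : ℂ} (h : ζ ^ 2 + b * ζ + 1 = 0)
    (hζ : ‖ζ‖ = 1) : b.im = 0 := by
  have hζ₀ : ζ ≠ 0 := norm_ne_zero_iff.mp (by simp [hζ])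
  have hb : b = -(ζ + conj ζ) := by
    rw [← RCLike.inv_eq_conj hζ]
    field_simp
    linear_combination h
  simp [hb]

theorem Complex.im_one_div_add_two_neg {lam : ℂ} (hlam : 0 < lam.im) : (1 / lam + 2).im < 0 := by
  have hnormSq : 0 < normSq lam := normSq_pos.mpr (by rintro rfl; simp at hlam)
  simpa [inv_im, neg_div] using div_pos hlam hnormSq

theorem IsAlgClosed.exists_sq_add_mul_add_eq_mul {K : Type*} [Field K] [IsAlgClosed K] (b c : K) :
    ∃ ζ₁ ζ₂ : K, ∀ ζ : K, ζ ^ 2 + b * ζ + c = (ζ - ζ₁) * (ζ - ζ₂) := by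
  open Polynomial in
  obtain ⟨ζ₁, hζ₁⟩ := IsAlgClosed.exists_root (C 1 * X ^ 2 + C b * X + C c)
    (by rw [degree_quadratic one_ne_zero]; decide)
  simp only [IsRoot, eval_add, eval_pow, eval_mul, eval_C, eval_X, one_mul] at hζ₁
  exact ⟨ζ₁, -b - ζ₁, fun ζ => by linear_combination hζ₁⟩

theorem xor_lt_one_of_mul_eq_one {a b : ℝ} (ha : 0 ≤ a) (hab : a * b = 1) (ha₁ : a ≠ 1) :
    Xor (a < 1) (b < 1) := by
  rcases ha₁.lt_or_gt with h | h
  · exact Or.inl ⟨h, fun hb => by nlinarith⟩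
  · exact Or.inr ⟨by nlinarith, h.not_gt⟩

/-- from Example 2.3: for `λ ∈ ℂ₊`, the quadratic
`ζ² + (1/λ + 2)ζ + 1 = 0` has two distinct roots with product `1`, neither of
modulus `1`, and exactly one of them lies in the open unit disc. -/
theorem statement19 (lam : ℂ) (hlam : 0 < lam.im) :
    ∃ ζ₁ ζ₂ : ℂ,
      ζ₁ ≠ ζ₂ ∧
      ζ₁ ^ 2 + (1 / lam + 2) * ζ₁ + 1 = 0 ∧
      ζ₂ ^ 2 + (1 / lam + 2) * ζ₂ + 1 = 0 ∧
      (∀ ζ : ℂ, ζ ^ 2 + (1 / lam + 2) * ζ + 1 = 0 → ζ = ζ₁ ∨ ζ = ζ₂) ∧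
      ζ₁ * ζ₂ = 1 ∧
      ‖ζ₁‖ ≠ 1 ∧ ‖ζ₂‖ ≠ 1 ∧
      Xor' (‖ζ₁‖ < 1) (‖ζ₂‖ < 1) := by
  obtain ⟨ζ₁, ζ₂, hfactor⟩ := IsAlgClosed.exists_sq_add_mul_add_eq_mul (1 / lam + 2) 1
  have hroot (ζ : ℂ) : ζ ^ 2 + (1 / lam + 2) * ζ + 1 = 0 ↔ ζ = ζ₁ ∨ ζ = ζ₂ := by
    rw [hfactor, mul_eq_zero, sub_eq_zero, sub_eq_zero]
  have hprod : ζ₁ * ζ₂ = 1 := by simpa using (hfactor 0).symm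
  have hnorm {ζ : ℂ} (hζ : ζ = ζ₁ ∨ ζ = ζ₂) : ‖ζ‖ ≠ 1 := fun h =>
    (im_one_div_add_two_neg hlam).ne (im_eq_zero_of_sq_add_mul_add_one_eq_zero ((hroot ζ).2 hζ) h)
  have hne : ζ₁ ≠ ζ₂ := by
    rintro rfl
    refine hnorm (.inl rfl) ((pow_eq_one_iff_of_nonneg (norm_nonneg ζ₁) two_ne_zero).mp ?_)
    rw [← norm_pow, sq, hprod, norm_one]
  refine ⟨ζ₁, ζ₂, hne, (hroot _).2 (.inl rfl), (hroot _).2 (.inr rfl), fun ζ => (hroot ζ).1, hprod,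
    hnorm (.inl rfl), hnorm (.inr rfl), ?_⟩
  exact xor_lt_one_of_mul_eq_one (norm_nonneg _) (by rw [← norm_mul, hprod, norm_one])
    (hnorm (.inl rfl))
end
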